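/- arXiv:0710.3647 — 2 statements merged into one kernel-verified Lean document; each statement's English description precedes it below -/
import Mathlib

section
/- Let P₁ be the gamma distribution with shape α₁ > 0 and scale β₁ > 0, and P₂ the gamma distribution with shape α₂ > 0 and scale β₂ > 0, and suppose the means are equal: α₁β₁ = α₂β₂. Then D(P₁‖P₂) = ∫₀^{α₂−α₁} (ψ′(α₁ + t) − 1/(α₁ + t))·(α₂ − α₁ − t) dt, where ψ′ = (log Γ)″ is the trigamma function and the integral is the oriented interval integral. -/
open MeasureTheory Real Set intervalIntegral

/-- The gamma distribution with shape `α` and scale `β`: the measure on `ℝ` with density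
`x ^ (α - 1) * exp (-x / β) / (Γ α * β ^ α)` on `(0, ∞)`. -/
noncomputable def gammaDist (α β : ℝ) : Measure ℝ :=
  volume.withDensity fun x =>
    ENNReal.ofReal (if x ∈ Set.Ioi (0 : ℝ) then
      x ^ (α - 1) * Real.exp (-x / β) / (Real.Gamma α * β ^ α) else 0)

/-- Kullback–Leibler divergence `D(P‖Q) = ∫ log (dP/dQ) dP`. -/
noncomputable def klDiv (P Q : Measure ℝ) : ℝ :=
  ∫ x, Real.log (P.rnDeriv Q x).toReal ∂P

/-- The trigamma function `ψ′ = (log Γ)″`. -/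
noncomputable def trigamma (x : ℝ) : ℝ :=
  deriv (deriv (fun y => Real.log (Real.Gamma y))) x

/-!
Both densities are explicit, so `log (dP₁/dP₂)` is affine in `log x` and `x`, and the divergence
only involves the moments `E[log X] = ψ(α₁) + log β₁` and `E[X] = α₁β₁` under `P₁`; the first
comes from differentiating Euler's integral for `Γ` under the integral sign. When the means agree,
`D(P₁‖P₂) = G(α₂) - G(α₁) - (α₂ - α₁) G'(α₁)` for `G(y) = log Γ(y) - y log y + y`, and the
claimed integral is Taylor's formula with integral remainder for `G`, since `G'' = ψ′ - 1/y`.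
-/

open Filter
open scoped ENNReal ContDiff

theorem MeasureTheory.Measure.rnDeriv_withDensity_withDensity {α : Type*} [MeasurableSpace α]
    {μ : Measure α} [SigmaFinite μ] {f g : α → ℝ≥0∞} [SigmaFinite (μ.withDensity f)]
    (hf : AEMeasurable f μ) (hg : AEMeasurable g μ) (hg₀ : ∀ᵐ x ∂μ, g x ≠ 0)
    (hg_top : ∀ᵐ x ∂μ, g x ≠ ⊤) :
    (μ.withDensity f).rnDeriv (μ.withDensity g) =ᵐ[μ] fun x => f x / g x := by
  filter_upwards [rnDeriv_withDensity_right (μ.withDensity f) μ hg hg₀ hg_top,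
    rnDeriv_withDensity₀ μ hf] with x h₁ h₂
  rw [h₁, h₂, div_eq_mul_inv, mul_comm]

theorem taylor_integral_remainder_one_of_hasDerivAt {f f' f'' : ℝ → ℝ} {a b : ℝ}
    (hf : ∀ t ∈ uIcc a b, HasDerivAt f (f' t) t)
    (hf' : ∀ t ∈ uIcc a b, HasDerivAt f' (f'' t) t)
    (hf'' : IntervalIntegrable f'' volume a b) :
    ∫ t in a..b, f'' t * (b - t) = f b - f a - (b - a) * f' a := by
  have hH : ∀ t ∈ uIcc a b, HasDerivAt (fun t => f t + (b - t) * f' t) (f'' t * (b - t)) t := by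
    intro t ht
    exact ((hf t ht).fun_add (((hasDerivAt_id' t).const_sub b).fun_mul (hf' t ht))).congr_deriv
      (by ring)
  rw [integral_eq_sub_of_hasDerivAt hH (hf''.mul_continuousOn (by fun_prop))]
  ring

namespace Real

theorem contDiff_inv_Gamma : ContDiff ℝ ∞ fun s : ℝ => (Gamma s)⁻¹ := by
  have h : ContDiff ℝ ∞ fun s : ℂ => (Complex.Gamma s)⁻¹ :=
    Complex.differentiable_one_div_Gamma.contDiff.restrict_scalars ℝ
  convert Complex.reCLM.contDiff.comp (h.comp Complex.ofRealCLM.contDiff) using 2 with s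
  simp [Complex.Gamma_ofReal, ← Complex.ofReal_inv]

theorem contDiffAt_Gamma {s : ℝ} (hs : Gamma s ≠ 0) : ContDiffAt ℝ ∞ Gamma s :=
  (contDiff_inv_Gamma.contDiffAt.inv (inv_ne_zero hs)).congr_of_eventuallyEq
    (Eventually.of_forall fun _ => (inv_inv _).symm)

theorem contDiffOn_log_Gamma : ContDiffOn ℝ ∞ (fun s => log (Gamma s)) (Ioi 0) :=
  fun _ hs => ((contDiffAt_Gamma (Gamma_pos_of_pos hs).ne').log
    (Gamma_pos_of_pos hs).ne').contDiffWithinAt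

theorem hasDerivAt_Gamma_of_pos {s : ℝ} (hs : 0 < s) :
    HasDerivAt Gamma (∫ t in Ioi 0, exp (-t) * t ^ (s - 1) * log t) s := by
  have hre : 0 < (s : ℂ).re := by simpa using hs
  have hc : HasDerivAt Complex.Gamma
      (∫ t : ℝ in Ioi 0, (t : ℂ) ^ ((s : ℂ) - 1) * (log t * exp (-t))) s :=
    (Complex.hasDerivAt_GammaIntegral hre).congr_of_eventuallyEq <|
      ((Complex.continuous_re.isOpen_preimage _ isOpen_Ioi).eventually_mem hre).mono
        fun z hz => Complex.Gamma_eq_integral hz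
  have hint : (∫ t : ℝ in Ioi 0, (t : ℂ) ^ ((s : ℂ) - 1) * (log t * exp (-t))) =
      ((∫ t in Ioi 0, exp (-t) * t ^ (s - 1) * log t : ℝ) : ℂ) := by
    rw [← integral_complex_ofReal]
    refine setIntegral_congr_fun measurableSet_Ioi fun t ht => ?_
    rw [← Complex.ofReal_one, ← Complex.ofReal_sub, ← Complex.ofReal_cpow (le_of_lt ht)]
    push_cast; ring
  rw [hint] at hc
  simpa [Complex.Gamma_ofReal] using hc.real_of_complex

theorem abs_log_le_rpow_add_rpow_neg_div {x ε : ℝ} (hx : 0 < x) (hε : 0 < ε) :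
    |log x| ≤ (x ^ ε + x ^ (-ε)) / ε := by
  have hpos : log x ≤ x ^ ε / ε := log_le_rpow_div hx.le hε
  have hneg : -log x ≤ x ^ (-ε) / ε := by
    rw [← log_inv, rpow_neg hx.le, ← inv_rpow hx.le]
    exact log_le_rpow_div (inv_nonneg.2 hx.le) hε
  rw [add_div]
  refine abs_le.2 ⟨?_, ?_⟩ <;> linarith [div_nonneg (rpow_nonneg hx.le ε) hε.le,
    div_nonneg (rpow_nonneg hx.le (-ε)) hε.le]

theorem integrableOn_Gamma_integrand_mul_log {s : ℝ} (hs : 0 < s) :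
    IntegrableOn (fun t => exp (-t) * t ^ (s - 1) * log t) (Ioi 0) := by
  have hdom : IntegrableOn
      (fun t => (exp (-t) * t ^ (s + s / 2 - 1) + exp (-t) * t ^ (s / 2 - 1)) / (s / 2))
      (Ioi 0) :=
    ((GammaIntegral_convergent (by linarith)).add
      (GammaIntegral_convergent (by linarith))).div_const _
  refine hdom.mono' (by fun_prop) ?_
  filter_upwards [ae_restrict_mem measurableSet_Ioi] with t (ht : 0 < t)
  have hsplit : ∀ ε, t ^ (s + ε - 1) = t ^ (s - 1) * t ^ ε := fun ε => by
    rw [← rpow_add ht]; ring_nf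
  calc ‖exp (-t) * t ^ (s - 1) * log t‖ = exp (-t) * t ^ (s - 1) * |log t| := by
        rw [norm_mul, norm_of_nonneg (by positivity), norm_eq_abs]
    _ ≤ exp (-t) * t ^ (s - 1) * ((t ^ (s / 2) + t ^ (-(s / 2))) / (s / 2)) := by
        gcongr; exact abs_log_le_rpow_add_rpow_neg_div ht (by linarith)
    _ = _ := by
        rw [hsplit, show s / 2 - 1 = s + -(s / 2) - 1 by ring, hsplit]; ring

end Real

noncomputable def digamma (x : ℝ) : ℝ :=
  deriv (fun y => log (Gamma y)) x

theorem contDiffOn_digamma : ContDiffOn ℝ ∞ digamma (Ioi 0) :=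
  contDiffOn_log_Gamma.deriv_of_isOpen isOpen_Ioi le_rfl

theorem continuousOn_trigamma : ContinuousOn trigamma (Ioi 0) :=
  (contDiffOn_digamma.deriv_of_isOpen isOpen_Ioi (m := 0) (by simp)).continuousOn

theorem hasDerivAt_log_Gamma {s : ℝ} (hs : 0 < s) :
    HasDerivAt (fun y => log (Gamma y)) (digamma s) s :=
  ((contDiffOn_log_Gamma.contDiffAt (Ioi_mem_nhds hs)).differentiableAt (by simp)).hasDerivAt

theorem hasDerivAt_digamma {s : ℝ} (hs : 0 < s) : HasDerivAt digamma (trigamma s) s :=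
  ((contDiffOn_digamma.contDiffAt (Ioi_mem_nhds hs)).differentiableAt (by simp)).hasDerivAt

theorem digamma_eq_integral_div_Gamma {s : ℝ} (hs : 0 < s) :
    digamma s = (∫ t in Ioi 0, exp (-t) * t ^ (s - 1) * log t) / Gamma s :=
  (hasDerivAt_log_Gamma hs).unique ((hasDerivAt_Gamma_of_pos hs).log (Gamma_pos_of_pos hs).ne')

theorem integral_trigamma_sub_inv_mul_sub {a b : ℝ} (ha : 0 < a) (hb : 0 < b) :
    ∫ y in a..b, (trigamma y - 1 / y) * (b - y) =
      log (Gamma b) - b * log b + b - (log (Gamma a) - a * log a + a)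
        - (b - a) * (digamma a - log a) := by
  have hpos : ∀ y ∈ uIcc a b, 0 < y := fun y hy => (lt_min ha hb).trans_le hy.1
  refine taylor_integral_remainder_one_of_hasDerivAt
    (f := fun y => log (Gamma y) - y * log y + y) (f' := fun y => digamma y - log y)
    (fun y hy => ?_) (fun y hy => ?_) ?_
  · have hy := hpos y hy
    exact (((hasDerivAt_log_Gamma hy).fun_sub
      ((hasDerivAt_id' y).fun_mul (hasDerivAt_log hy.ne'))).fun_add (hasDerivAt_id' y)).congr_deriv
      (by field_simp; ring)
  · simpa only [one_div] using
      (hasDerivAt_digamma (hpos y hy)).fun_sub (hasDerivAt_log (hpos y hy).ne')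
  · refine ContinuousOn.intervalIntegrable ((continuousOn_trigamma.mono hpos).sub ?_)
    exact continuousOn_const.div continuousOn_id fun y hy => (hpos y hy).ne'

noncomputable def gammaDensity (a b x : ℝ) : ℝ :=
  x ^ (a - 1) * exp (-x / b) / (Gamma a * b ^ a)

section GammaDist

variable {a b : ℝ}

theorem measurable_gammaDensity : Measurable (gammaDensity a b) := by
  unfold gammaDensity; fun_prop

theorem gammaDensity_pos (ha : 0 < a) (hb : 0 < b) {x : ℝ} (hx : 0 < x) :
    0 < gammaDensity a b x := by
  have := Gamma_pos_of_pos ha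
  unfold gammaDensity; positivity

theorem log_gammaDensity (ha : 0 < a) (hb : 0 < b) {x : ℝ} (hx : 0 < x) :
    log (gammaDensity a b x) = (a - 1) * log x - x / b - log (Gamma a) - a * log b := by
  have := Gamma_pos_of_pos ha
  rw [gammaDensity, log_div (by positivity) (by positivity),
    log_mul (by positivity) (by positivity), log_mul (by positivity) (by positivity),
    log_rpow hx, log_rpow hb, log_exp]
  ring

theorem Gamma_mul_mul_gammaDensity (ha : 0 < a) (hb : 0 < b) {t : ℝ} (ht : 0 < t) :
    Gamma a * b * gammaDensity a b (b * t) = exp (-t) * t ^ (a - 1) := by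
  have := Gamma_pos_of_pos ha
  rw [gammaDensity, mul_rpow hb.le ht.le, show -(b * t) / b = -t by field_simp,
    show b ^ a = b ^ (a - 1) * b by rw [← rpow_add_one hb.ne']; ring_nf]
  field_simp

theorem gammaDist_eq_withDensity (a b : ℝ) :
    gammaDist a b =
      (volume.restrict (Ioi 0)).withDensity fun x => ENNReal.ofReal (gammaDensity a b x) := by
  rw [gammaDist, ← withDensity_indicator measurableSet_Ioi]
  congr 1
  ext x
  by_cases h : x ∈ Ioi (0 : ℝ) <;> simp [h, indicator, gammaDensity]

theorem gammaDist_eq_gammaMeasure (hb : 0 < b) :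
    gammaDist a b = ProbabilityTheory.gammaMeasure a b⁻¹ := by
  rw [gammaDist, ProbabilityTheory.gammaMeasure]
  refine withDensity_congr_ae ?_
  filter_upwards [volume.ae_ne 0] with x hx
  rw [ProbabilityTheory.gammaPDF_eq]
  rcases hx.lt_or_gt with h | h
  · simp [h.not_gt, h.not_ge]
  · simp only [mem_Ioi, h, h.le, if_true]
    rw [inv_rpow hb.le, neg_div, div_eq_inv_mul]
    ring_nf

theorem isProbabilityMeasure_gammaDist (ha : 0 < a) (hb : 0 < b) :
    IsProbabilityMeasure (gammaDist a b) := by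
  rw [gammaDist_eq_gammaMeasure hb]
  exact ProbabilityTheory.isProbabilityMeasure_gammaMeasure ha (inv_pos.2 hb)

theorem gammaDist_absolutelyContinuous : gammaDist a b ≪ volume.restrict (Ioi 0) := by
  rw [gammaDist_eq_withDensity]
  exact withDensity_absolutelyContinuous _ _

theorem integral_gammaDist (ha : 0 < a) (hb : 0 < b) (g : ℝ → ℝ) :
    ∫ x, g x ∂gammaDist a b = (∫ t in Ioi 0, exp (-t) * t ^ (a - 1) * g (b * t)) / Gamma a := by
  have hsubst := integral_comp_mul_left_Ioi' (fun x => gammaDensity a b x * g x) 0 hb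
  rw [mul_zero] at hsubst
  rw [gammaDist_eq_withDensity, integral_withDensity_eq_integral_toReal_smul
    measurable_gammaDensity.ennreal_ofReal (ae_of_all _ fun _ => ENNReal.ofReal_lt_top),
    setIntegral_congr_fun measurableSet_Ioi fun x (hx : 0 < x) => by
      rw [ENNReal.toReal_ofReal (gammaDensity_pos ha hb hx).le, smul_eq_mul],
    ← hsubst, smul_eq_mul, ← MeasureTheory.integral_const_mul, ← MeasureTheory.integral_div]
  refine setIntegral_congr_fun measurableSet_Ioi fun t (ht : 0 < t) => ?_
  rw [eq_div_iff (Gamma_pos_of_pos ha).ne', ← Gamma_mul_mul_gammaDensity ha hb ht]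
  ring

theorem integrable_gammaDist_iff (ha : 0 < a) (hb : 0 < b) (g : ℝ → ℝ) :
    Integrable g (gammaDist a b) ↔
      IntegrableOn (fun t => exp (-t) * t ^ (a - 1) * g (b * t)) (Ioi 0) := by
  have hsubst := integrableOn_Ioi_comp_mul_left_iff
    (fun x => g x * (ENNReal.ofReal (gammaDensity a b x)).toReal) 0 hb
  rw [mul_zero] at hsubst
  rw [gammaDist_eq_withDensity, integrable_withDensity_iff
    measurable_gammaDensity.ennreal_ofReal (ae_of_all _ fun _ => ENNReal.ofReal_lt_top)]
  change IntegrableOn _ (Ioi (0 : ℝ)) ↔ _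
  rw [← hsubst]
  refine (integrable_const_mul_iff
    (isUnit_iff_ne_zero.2 (mul_pos (Gamma_pos_of_pos ha) hb).ne') _).symm.trans
    (integrableOn_congr_fun (fun t (ht : 0 < t) => ?_) measurableSet_Ioi)
  rw [ENNReal.toReal_ofReal (gammaDensity_pos ha hb (mul_pos hb ht)).le,
    ← Gamma_mul_mul_gammaDensity ha hb ht]
  ring

theorem integral_id_gammaDist (ha : 0 < a) (hb : 0 < b) : ∫ x, x ∂gammaDist a b = a * b := by
  have hΓ := Gamma_eq_integral (add_pos ha one_pos)
  rw [Gamma_add_one ha.ne', add_sub_cancel_right] at hΓ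
  rw [integral_gammaDist ha hb, div_eq_iff (Gamma_pos_of_pos ha).ne', mul_comm a b, mul_assoc,
    hΓ, ← MeasureTheory.integral_const_mul]
  refine setIntegral_congr_fun measurableSet_Ioi fun t (ht : 0 < t) => ?_
  rw [rpow_sub_one ht.ne']
  field_simp

theorem integrable_id_gammaDist (ha : 0 < a) (hb : 0 < b) :
    Integrable (fun x => x) (gammaDist a b) := by
  refine (integrable_gammaDist_iff ha hb _).2 <| IntegrableOn.congr_fun
    ((GammaIntegral_convergent (add_pos ha one_pos)).const_mul b)
    (fun t (ht : 0 < t) => ?_) measurableSet_Ioi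
  rw [add_sub_cancel_right, rpow_sub_one ht.ne']
  field_simp

theorem integral_log_gammaDist (ha : 0 < a) (hb : 0 < b) :
    ∫ x, log x ∂gammaDist a b = digamma a + log b := by
  have hsplit : EqOn (fun t => exp (-t) * t ^ (a - 1) * log (b * t))
      (fun t => log b * (exp (-t) * t ^ (a - 1)) + exp (-t) * t ^ (a - 1) * log t) (Ioi 0) :=
    fun t (ht : 0 < t) => by simp only [log_mul hb.ne' ht.ne']; ring
  rw [integral_gammaDist ha hb, setIntegral_congr_fun measurableSet_Ioi hsplit,
    integral_add ((GammaIntegral_convergent ha).const_mul _)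
      (integrableOn_Gamma_integrand_mul_log ha),
    MeasureTheory.integral_const_mul, ← Gamma_eq_integral ha, digamma_eq_integral_div_Gamma ha]
  field_simp
  ring

theorem integrable_log_gammaDist (ha : 0 < a) (hb : 0 < b) : Integrable log (gammaDist a b) := by
  refine (integrable_gammaDist_iff ha hb _).2 <| IntegrableOn.congr_fun
    (((GammaIntegral_convergent ha).const_mul (log b)).add
      (integrableOn_Gamma_integrand_mul_log ha))
    (fun t (ht : 0 < t) => ?_) measurableSet_Ioi
  simp only [Pi.add_apply, log_mul hb.ne' ht.ne']
  ring

end GammaDist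

section KL

variable {α₁ β₁ α₂ β₂ : ℝ}

theorem log_rnDeriv_gammaDist (hα₁ : 0 < α₁) (hβ₁ : 0 < β₁) (hα₂ : 0 < α₂) (hβ₂ : 0 < β₂) :
    (fun x => log ((gammaDist α₁ β₁).rnDeriv (gammaDist α₂ β₂) x).toReal) =ᵐ[gammaDist α₁ β₁]
      fun x => (α₁ - α₂) * log x + (β₂⁻¹ - β₁⁻¹) * x +
        (log (Gamma α₂) + α₂ * log β₂ - log (Gamma α₁) - α₁ * log β₁) := by
  have hpos : ∀ᵐ x ∂volume.restrict (Ioi (0 : ℝ)), 0 < x := ae_restrict_mem measurableSet_Ioi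
  have hrn := Measure.rnDeriv_withDensity_withDensity
    (measurable_gammaDensity (a := α₁) (b := β₁)).ennreal_ofReal.aemeasurable
    measurable_gammaDensity.ennreal_ofReal.aemeasurable
    (hpos.mono fun x hx => (ENNReal.ofReal_pos.2 (gammaDensity_pos hα₂ hβ₂ hx)).ne')
    (ae_of_all _ fun _ => ENNReal.ofReal_ne_top)
  rw [← gammaDist_eq_withDensity, ← gammaDist_eq_withDensity] at hrn
  filter_upwards [gammaDist_absolutelyContinuous.ae_le hrn,
    gammaDist_absolutelyContinuous.ae_le hpos] with x hx hx₀
  rw [hx, ENNReal.toReal_div, ENNReal.toReal_ofReal (gammaDensity_pos hα₁ hβ₁ hx₀).le,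
    ENNReal.toReal_ofReal (gammaDensity_pos hα₂ hβ₂ hx₀).le,
    log_div (gammaDensity_pos hα₁ hβ₁ hx₀).ne' (gammaDensity_pos hα₂ hβ₂ hx₀).ne',
    log_gammaDensity hα₁ hβ₁ hx₀, log_gammaDensity hα₂ hβ₂ hx₀]
  ring

theorem klDiv_gammaDist (hα₁ : 0 < α₁) (hβ₁ : 0 < β₁) (hα₂ : 0 < α₂) (hβ₂ : 0 < β₂) :
    klDiv (gammaDist α₁ β₁) (gammaDist α₂ β₂) =
      (α₁ - α₂) * digamma α₁ + log (Gamma α₂) - log (Gamma α₁) +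
        α₂ * (log β₂ - log β₁) + α₁ * (β₁ / β₂ - 1) := by
  have := isProbabilityMeasure_gammaDist hα₁ hβ₁
  have hlog := (integrable_log_gammaDist hα₁ hβ₁).const_mul (α₁ - α₂)
  have hid := (integrable_id_gammaDist hα₁ hβ₁).const_mul (β₂⁻¹ - β₁⁻¹)
  rw [klDiv, integral_congr_ae (log_rnDeriv_gammaDist hα₁ hβ₁ hα₂ hβ₂),
    integral_add (f := fun x => (α₁ - α₂) * log x + (β₂⁻¹ - β₁⁻¹) * x)
      (hlog.add hid) (integrable_const _), integral_add hlog hid,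
    MeasureTheory.integral_const_mul, MeasureTheory.integral_const_mul,
    integral_log_gammaDist hα₁ hβ₁, integral_id_gammaDist hα₁ hβ₁, MeasureTheory.integral_const,
    probReal_univ, one_smul]
  field_simp
  ring

end KL

theorem klDiv_gamma_gamma_same_mean (α₁ β₁ α₂ β₂ : ℝ) (hα₁ : 0 < α₁) (hβ₁ : 0 < β₁)
    (hα₂ : 0 < α₂) (hβ₂ : 0 < β₂) (hmean : α₁ * β₁ = α₂ * β₂) :
    klDiv (gammaDist α₁ β₁) (gammaDist α₂ β₂) =
      ∫ t in (0 : ℝ)..(α₂ - α₁), (trigamma (α₁ + t) - 1 / (α₁ + t)) * (α₂ - α₁ - t) := by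
  have hshift : ∫ t in (0 : ℝ)..(α₂ - α₁), (trigamma (α₁ + t) - 1 / (α₁ + t)) * (α₂ - α₁ - t) =
      ∫ y in α₁..α₂, (trigamma y - 1 / y) * (α₂ - y) := by
    simpa only [add_zero, add_sub_cancel, sub_sub] using
      integral_comp_add_left (fun y => (trigamma y - 1 / y) * (α₂ - y)) α₁ (a := 0) (b := α₂ - α₁)
  have hscale : β₁ / β₂ = α₂ / α₁ := by
    rw [div_eq_div_iff hβ₂.ne' hα₁.ne']; linarith
  have hlog_scale : log β₂ - log β₁ = log α₁ - log α₂ := by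
    have h := congrArg log hmean
    rw [log_mul hα₁.ne' hβ₁.ne', log_mul hα₂.ne' hβ₂.ne'] at h
    linarith
  rw [klDiv_gammaDist hα₁ hβ₁ hα₂ hβ₂, hshift, integral_trigamma_sub_inv_mul_sub hα₁ hα₂, hscale,
    hlog_scale]
  field_simp
  ring
end

section
/- Let f : [0,1] → ℝ be continuous with Haar wavelet coefficients θ_{i,j} = ∫₀¹ f·ψ_{i,j}, let k ∈ ℕ and n = 2^k, and suppose Σ_{i≥k} 2^{i/2}·max_{1≤j≤2^i} |θ_{i,j}| < ∞. Then Σ_{ℓ=1}^{n} ( f(ℓ/n) − n·∫_{(ℓ−1)/n}^{ℓ/n} f(x) dx )² ≤ n·( Σ_{i=k}^∞ 2^{i/2}·max_{1≤j≤2^i} |θ_{i,j}| )². -/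
/-!
Fix `p = ℓ / 2^k` and let `A m = 2^m ∫_{p - 2^{-m}}^p f` be the average of `f` over the dyadic
interval of length `2^{-m}` ending at `p`. By the fundamental theorem of calculus `A m → f p`, and
the level-`m` Haar wavelet supported on that interval gives `A (m+1) - A m = -2^{m/2} θ_{m,j}`.
Telescoping bounds `|f p - A k|` by `∑_{m ≥ k} 2^{m/2} max_j |θ_{m,j}|`; squaring and summing over
the `n` points gives the claim.
-/

open MeasureTheory Real Set intervalIntegral

/-- The Haar wavelet `ψ_{i,j}` on `[0,1]`, for `i ∈ ℕ` and `j = 1, …, 2^i`. -/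
noncomputable def haar (i j : ℕ) (x : ℝ) : ℝ :=
  if ((j : ℝ) - 1) / 2 ^ i < x ∧ x ≤ ((j : ℝ) - 1 / 2) / 2 ^ i then (2 : ℝ) ^ ((i : ℝ) / 2)
  else if ((j : ℝ) - 1 / 2) / 2 ^ i < x ∧ x ≤ (j : ℝ) / 2 ^ i then -((2 : ℝ) ^ ((i : ℝ) / 2))
  else 0

/-- The Haar wavelet coefficient `θ_{i,j} = ∫₀¹ f ψ_{i,j}`. -/
noncomputable def haarCoef (f : ℝ → ℝ) (i j : ℕ) : ℝ :=
  ∫ x in (0 : ℝ)..1, f x * haar i j x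

/-- `max_{1 ≤ j ≤ 2^i} |θ_{i,j}|`. -/
noncomputable def maxAbsCoef (f : ℝ → ℝ) (i : ℕ) : ℝ :=
  (Finset.Icc 1 (2 ^ i)).sup' (Finset.nonempty_Icc.mpr Nat.one_le_two_pow)
    fun j => |haarCoef f i j|

open Filter Topology

theorem tendsto_inv_mul_integral_sub_left {f : ℝ → ℝ} {a p : ℝ} (hf : ContinuousOn f (Icc a p))
    (hap : a < p) :
    Tendsto (fun h => h⁻¹ * ∫ x in (p - h)..p, f x) (𝓝[>] 0) (𝓝 (f p)) := by
  have hcont : ContinuousWithinAt f (Iic p) p := by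
    rw [ContinuousWithinAt, ← nhdsWithin_Icc_eq_nhdsLE hap]
    exact hf p (right_mem_Icc.2 hap.le)
  have hmeas : StronglyMeasurableAtFilter f (𝓝[≤] p) := by
    rw [← nhdsWithin_Icc_eq_nhdsLE hap]
    exact hf.stronglyMeasurableAtFilter_nhdsWithin measurableSet_Icc p
  have hderiv : HasDerivWithinAt (fun u => ∫ x in p..u, f x) (f p) (Iio p) p :=
    (integral_hasDerivWithinAt_right .refl hmeas hcont).mono Iio_subset_Iic_self
  have hslope := (hasDerivWithinAt_iff_tendsto_slope' self_notMem_Iio).1 hderiv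
  have hshift : Tendsto (fun h => p - h) (𝓝[>] 0) (𝓝[<] p) := by
    refine tendsto_nhdsWithin_of_tendsto_nhds_of_eventually_within _ ?_ ?_
    · exact ((continuous_const.sub continuous_id).tendsto' 0 p (sub_zero p)).mono_left
        nhdsWithin_le_nhds
    · filter_upwards [self_mem_nhdsWithin] with h hh
      exact sub_lt_self p hh
  refine (hslope.comp hshift).congr fun h => ?_
  simp only [Function.comp_apply, slope_def_field, integral_same, sub_zero, sub_sub_cancel_left,
    integral_symm p (p - h), mul_neg]
  ring

theorem intervalIntegral_indicator_Ioc {f : ℝ → ℝ} {a b c d : ℝ} (hab : a ≤ b) (hcd : c ≤ d)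
    (hsub : Ioc c d ⊆ Ioc a b) :
    ∫ x in a..b, (Ioc c d).indicator f x = ∫ x in c..d, f x := by
  rw [integral_of_le hab, integral_of_le hcd, MeasureTheory.integral_indicator measurableSet_Ioc,
    Measure.restrict_restrict measurableSet_Ioc, inter_eq_left.2 hsub]

theorem mul_haar_eq (f : ℝ → ℝ) (i j : ℕ) (x : ℝ) :
    f x * haar i j x = 2 ^ ((i : ℝ) / 2) *
      ((Ioc (((j : ℝ) - 1) / 2 ^ i) (((j : ℝ) - 1 / 2) / 2 ^ i)).indicator f x -
        (Ioc (((j : ℝ) - 1 / 2) / 2 ^ i) ((j : ℝ) / 2 ^ i)).indicator f x) := by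
  simp only [haar, indicator, mem_Ioc]
  split_ifs <;> grind

theorem haarCoef_eq {f : ℝ → ℝ} (hf : IntervalIntegrable f volume 0 1) {i j : ℕ} (hj : 1 ≤ j)
    (hji : j ≤ 2 ^ i) :
    haarCoef f i j = 2 ^ ((i : ℝ) / 2) *
      ((∫ x in (((j : ℝ) - 1) / 2 ^ i)..(((j : ℝ) - 1 / 2) / 2 ^ i), f x) -
        ∫ x in (((j : ℝ) - 1 / 2) / 2 ^ i)..((j : ℝ) / 2 ^ i), f x) := by
  have h2i : (0 : ℝ) < 2 ^ i := by positivity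
  have hj' : (1 : ℝ) ≤ j := by exact_mod_cast hj
  have hji' : (j : ℝ) ≤ 2 ^ i := by exact_mod_cast hji
  have h0a : 0 ≤ ((j : ℝ) - 1) / 2 ^ i := div_nonneg (by linarith) h2i.le
  have hab : ((j : ℝ) - 1) / 2 ^ i ≤ ((j : ℝ) - 1 / 2) / 2 ^ i := by gcongr; linarith
  have hbc : ((j : ℝ) - 1 / 2) / 2 ^ i ≤ (j : ℝ) / 2 ^ i := by gcongr; linarith
  have hc1 : (j : ℝ) / 2 ^ i ≤ 1 := (div_le_one h2i).2 hji'
  rw [haarCoef, funext (mul_haar_eq f i j), intervalIntegral.integral_const_mul,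
    intervalIntegral.integral_sub (intervalIntegrable_iff.2 (hf.def'.indicator measurableSet_Ioc))
      (intervalIntegrable_iff.2 (hf.def'.indicator measurableSet_Ioc)),
    intervalIntegral_indicator_Ioc zero_le_one hab (Ioc_subset_Ioc h0a (hbc.trans hc1)),
    intervalIntegral_indicator_Ioc zero_le_one hbc (Ioc_subset_Ioc (h0a.trans hab) hc1)]

noncomputable def dyadicLeftAverage (f : ℝ → ℝ) (p : ℝ) (m : ℕ) : ℝ :=
  2 ^ m * ∫ x in (p - (2 ^ m)⁻¹)..p, f x

theorem tendsto_dyadicLeftAverage {f : ℝ → ℝ} {a p : ℝ} (hf : ContinuousOn f (Icc a p))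
    (hap : a < p) : Tendsto (dyadicLeftAverage f p) atTop (𝓝 (f p)) :=
  ((tendsto_inv_mul_integral_sub_left hf hap).comp
    (tendsto_inv_atTop_nhdsGT_zero.comp (tendsto_pow_atTop_atTop_of_one_lt one_lt_two))).congr
    fun m => by simp [dyadicLeftAverage]

theorem dyadicLeftAverage_succ_sub {f : ℝ → ℝ} (hf : IntervalIntegrable f volume 0 1) {m j : ℕ}
    (hj : 1 ≤ j) (hjm : j ≤ 2 ^ m) :
    dyadicLeftAverage f (j / 2 ^ m) (m + 1) - dyadicLeftAverage f (j / 2 ^ m) m =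
      -(2 ^ ((m : ℝ) / 2) * haarCoef f m j) := by
  have h2m : (0 : ℝ) < 2 ^ m := by positivity
  have hj' : (1 : ℝ) ≤ j := by exact_mod_cast hj
  have hjm' : (j : ℝ) ≤ 2 ^ m := by exact_mod_cast hjm
  have hmem : ∀ x : ℝ, 0 ≤ x → x ≤ 2 ^ m → x / 2 ^ m ∈ uIcc 0 1 := fun x h0 h1 => by
    rw [uIcc_of_le zero_le_one]
    exact ⟨div_nonneg h0 h2m.le, (div_le_one h2m).2 h1⟩
  have ha := hmem ((j : ℝ) - 1) (by linarith) (by linarith)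
  have hb := hmem ((j : ℝ) - 1 / 2) (by linarith) (by linarith)
  have hc := hmem (j : ℝ) (by linarith) hjm'
  have hsplit := integral_add_adjacent_intervals (hf.mono_set (uIcc_subset_uIcc ha hb))
    (hf.mono_set (uIcc_subset_uIcc hb hc))
  have hroot : (2 : ℝ) ^ ((m : ℝ) / 2) * 2 ^ ((m : ℝ) / 2) = 2 ^ m := by
    rw [← rpow_add two_pos, add_halves, rpow_natCast]
  have hleft : (j : ℝ) / 2 ^ m - (2 ^ m)⁻¹ = ((j : ℝ) - 1) / 2 ^ m := by field_simp
  have hmid : (j : ℝ) / 2 ^ m - (2 ^ (m + 1))⁻¹ = ((j : ℝ) - 1 / 2) / 2 ^ m := by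
    rw [pow_succ]; field_simp
  rw [haarCoef_eq hf hj hjm, dyadicLeftAverage, dyadicLeftAverage, hleft, hmid, ← hsplit,
    ← mul_assoc, hroot, pow_succ]
  ring

theorem abs_sample_sub_dyadicLeftAverage_le {f : ℝ → ℝ} (hf : ContinuousOn f (Icc 0 1))
    {k ℓ : ℕ} (hℓ : 1 ≤ ℓ) (hℓk : ℓ ≤ 2 ^ k)
    (hsum : Summable fun i : ℕ => (2 : ℝ) ^ (((k + i : ℕ) : ℝ) / 2) * maxAbsCoef f (k + i)) :
    |f (ℓ / 2 ^ k) - dyadicLeftAverage f (ℓ / 2 ^ k) k| ≤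
      ∑' i : ℕ, (2 : ℝ) ^ (((k + i : ℕ) : ℝ) / 2) * maxAbsCoef f (k + i) := by
  set p : ℝ := ℓ / 2 ^ k
  have hp : 0 < p := by positivity
  have hp1 : p ≤ 1 := (div_le_one (by positivity)).2 (by exact_mod_cast hℓk)
  have hpj : ∀ i : ℕ, (((ℓ * 2 ^ i : ℕ) : ℝ) / 2 ^ (k + i)) = p := fun i => by
    simp only [p]; push_cast; rw [pow_add]; field_simp
  have hlim : Tendsto (fun i => dyadicLeftAverage f p (k + i)) atTop (𝓝 (f p)) :=
    (tendsto_dyadicLeftAverage (hf.mono (Icc_subset_Icc_right hp1)) hp).comp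
      (tendsto_atTop_mono (fun i => Nat.le_add_left i k) tendsto_id)
  have hstep : ∀ i : ℕ, dist (dyadicLeftAverage f p (k + i)) (dyadicLeftAverage f p (k + i + 1)) ≤
      (2 : ℝ) ^ (((k + i : ℕ) : ℝ) / 2) * maxAbsCoef f (k + i) := fun i => by
    have hj : 1 ≤ ℓ * 2 ^ i := Nat.one_le_iff_ne_zero.2 (by positivity)
    have hjk : ℓ * 2 ^ i ≤ 2 ^ (k + i) := by rw [pow_add]; exact Nat.mul_le_mul_right _ hℓk
    rw [dist_comm, dist_eq_norm, ← hpj i,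
      dyadicLeftAverage_succ_sub (hf.intervalIntegrable_of_Icc zero_le_one) hj hjk, norm_neg,
      norm_mul, norm_of_nonneg (by positivity)]
    gcongr
    exact Finset.le_sup' (fun j => |haarCoef f (k + i) j|) (Finset.mem_Icc.2 ⟨hj, hjk⟩)
  rw [abs_sub_comm, ← Real.dist_eq]
  exact dist_le_tsum_of_dist_le_of_tendsto₀ _ hstep hsum hlim

theorem sum_sq_sample_sub_average_le (f : ℝ → ℝ) (hf : ContinuousOn f (Set.Icc 0 1))
    (k : ℕ) (n : ℕ) (hn : n = 2 ^ k)
    (hsum : Summable fun i : ℕ =>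
      (2 : ℝ) ^ (((k + i : ℕ) : ℝ) / 2) * maxAbsCoef f (k + i)) :
    ∑ ℓ ∈ Finset.Icc 1 n,
        (f ((ℓ : ℝ) / n) - n * ∫ x in (((ℓ : ℝ) - 1) / n)..((ℓ : ℝ) / n), f x) ^ 2 ≤
      n * (∑' i : ℕ, (2 : ℝ) ^ (((k + i : ℕ) : ℝ) / 2) * maxAbsCoef f (k + i)) ^ 2 := by
  subst hn
  rw [Nat.cast_pow, Nat.cast_ofNat]
  calc _ ≤ ∑ _ℓ ∈ Finset.Icc 1 (2 ^ k),
        (∑' i : ℕ, (2 : ℝ) ^ (((k + i : ℕ) : ℝ) / 2) * maxAbsCoef f (k + i)) ^ 2 :=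
        Finset.sum_le_sum fun ℓ hℓ => ?_
    _ = _ := by simp
  obtain ⟨hℓ1, hℓk⟩ := Finset.mem_Icc.1 hℓ
  have h := abs_sample_sub_dyadicLeftAverage_le hf hℓ1 hℓk hsum
  rw [dyadicLeftAverage, show (ℓ : ℝ) / 2 ^ k - (2 ^ k)⁻¹ = ((ℓ : ℝ) - 1) / 2 ^ k by ring] at h
  exact sq_le_sq' (abs_le.1 h).1 (abs_le.1 h).2
end
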